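/- With the notation Obst_n(A) = A ∩ I_{n,A}, one has Obst_n(A) ⊆ Obst_{n−1}(A) for every n ≥ 2. -/

import Mathlib

open Finset

/-- The polynomial extension `A[ξ_{m,A}]` of `A` by central commuting indeterminates
`ξ_{i,a}` (`1 ≤ i ≤ m`, `a ∈ A`), realized as the monoid algebra of `A` over the free
commutative monoid on `Fin m × A`. -/
abbrev XiRing (A : Type*) [Ring A] (m : ℕ) : Type _ :=
  AddMonoidAlgebra A ((Fin m × A) →₀ ℕ)

/-- The indeterminate `ξ_{i,a}` in `A[ξ_{m,A}]`. -/
noncomputable def xi {A : Type*} [Ring A] {m : ℕ} (i : Fin m) (a : A) : XiRing A m :=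
  AddMonoidAlgebra.single (Finsupp.single (i, a) 1) 1

/-- The canonical embedding `A → A[ξ_{m,A}]`. -/
noncomputable def embA {A : Type*} [Ring A] (m : ℕ) : A →+* XiRing A m :=
  AddMonoidAlgebra.singleZeroRingHom

/-- The two-sided ideal `I_{m,A} ⊆ A[ξ_{m,A}]` generated by the elements
`a^m + ξ_{1,a} a^{m−1} + ⋯ + ξ_{m,a}` for `a ∈ A`. -/
noncomputable def IdealI (A : Type*) [Ring A] (m : ℕ) : TwoSidedIdeal (XiRing A m) :=
  TwoSidedIdeal.span {r : XiRing A m | ∃ a : A,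
    r = embA m (a ^ m) + ∑ i : Fin m, xi i a * embA m (a ^ (m - 1 - (i : ℕ)))}

/-!
Specializing `ξ_{n+1,b} ↦ 0` and keeping the other indeterminates is a ring homomorphism
`A[ξ_{n+1,A}] → A[ξ_{n,A}]` fixing `A`. It sends the generator
`b^{n+1} + ξ_{1,b} b^n + ⋯ + ξ_{n+1,b}` of `I_{n+1,A}` to
`(b^n + ξ_{1,b} b^{n-1} + ⋯ + ξ_{n,b}) b ∈ I_{n,A}`, hence maps `I_{n+1,A}` into `I_{n,A}`.
-/

section XiLift

variable {A B : Type*} [Ring A] [Ring B] {n : ℕ}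

lemma xi_mem_center (i : Fin n) (a : A) : xi i a ∈ Subsemiring.center (XiRing A n) :=
  Subsemiring.mem_center_iff.2 fun x =>
    (AddMonoidAlgebra.single_commute (fun _ => AddCommute.all _ _) Commute.one_left x).eq.symm

noncomputable def monomialEval (v : Fin n × A → Subsemiring.center B) :
    Multiplicative ((Fin n × A) →₀ ℕ) →* Subsemiring.center B where
  toFun f := (Multiplicative.toAdd f).prod fun p k => v p ^ k
  map_one' := Finsupp.prod_zero_index
  map_mul' _ _ := Finsupp.prod_add_index' (fun _ => pow_zero _) (fun _ _ _ => pow_add _ _ _)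

noncomputable def xiLift (f : A →+* B) (v : Fin n × A → Subsemiring.center B) :
    XiRing A n →+* B :=
  AddMonoidAlgebra.liftNCRingHom f
    (((Subsemiring.center B).subtype : Subsemiring.center B →* B).comp (monomialEval v))
    fun a g => ((monomialEval v g).2.comm (f a)).symm

@[simp]
lemma xiLift_embA (f : A →+* B) (v : Fin n × A → Subsemiring.center B) (a : A) :
    xiLift f v (embA n a) = f a := by
  have h : xiLift f v (AddMonoidAlgebra.single 0 a) = f a * (monomialEval v 1 : B) :=
    AddMonoidAlgebra.liftNC_single _ _ _ _
  rwa [map_one, OneMemClass.coe_one, mul_one] at h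

@[simp]
lemma xiLift_xi (f : A →+* B) (v : Fin n × A → Subsemiring.center B) (i : Fin n) (a : A) :
    xiLift f v (xi i a) = v (i, a) := by
  have h : xiLift f v (xi i a) = f 1 * (monomialEval v (.ofAdd (Finsupp.single (i, a) 1)) : B) :=
    AddMonoidAlgebra.liftNC_single _ _ _ _
  simpa [monomialEval] using h

end XiLift

section Truncation

variable {A : Type*} [Ring A] {n : ℕ}

noncomputable def truncXi (n : ℕ) : XiRing A (n + 1) →+* XiRing A n :=
  xiLift (embA n) fun p => Fin.lastCases 0 (fun i => ⟨xi i p.2, xi_mem_center _ _⟩) p.1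

@[simp]
lemma truncXi_embA (a : A) : truncXi n (embA (n + 1) a) = embA n a :=
  xiLift_embA _ _ a

@[simp]
lemma truncXi_xi_castSucc (i : Fin n) (a : A) : truncXi n (xi i.castSucc a) = xi i a := by
  simp [truncXi]

@[simp]
lemma truncXi_xi_last (a : A) : truncXi n (xi (Fin.last n) a) = 0 := by
  simp [truncXi]

noncomputable def obstructionGen (n : ℕ) (a : A) : XiRing A n :=
  embA n (a ^ n) + ∑ i : Fin n, xi i a * embA n (a ^ (n - 1 - (i : ℕ)))

lemma obstructionGen_mem_IdealI (a : A) : obstructionGen n a ∈ IdealI A n :=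
  TwoSidedIdeal.subset_span ⟨a, rfl⟩

lemma truncXi_obstructionGen (a : A) :
    truncXi n (obstructionGen (n + 1) a) = obstructionGen n a * embA n a := by
  have hexp (i : Fin n) : n + 1 - 1 - (i : ℕ) = n - 1 - (i : ℕ) + 1 := by omega
  rw [obstructionGen, obstructionGen, map_add, map_sum, Fin.sum_univ_castSucc]
  simp only [map_mul, truncXi_embA, truncXi_xi_castSucc, truncXi_xi_last, zero_mul, add_zero,
    add_mul, sum_mul]
  simp only [mul_assoc, ← map_mul, ← pow_succ, Fin.val_castSucc, hexp]

lemma IdealI_le_comap_truncXi : IdealI A (n + 1) ≤ (IdealI A n).comap (truncXi n) := by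
  refine TwoSidedIdeal.span_le.2 ?_
  rintro _ ⟨a, rfl⟩
  change obstructionGen (n + 1) a ∈ (IdealI A n).comap (truncXi n)
  rw [TwoSidedIdeal.mem_comap, truncXi_obstructionGen]
  exact (IdealI A n).mul_mem_right _ _ (obstructionGen_mem_IdealI a)

end Truncation

theorem stmt_15_general (A : Type*) [Ring A] (m : ℕ) :
    ∀ a : A, embA (m + 1) a ∈ IdealI A (m + 1) → embA m a ∈ IdealI A m := by
  intro a ha
  simpa only [TwoSidedIdeal.mem_comap, truncXi_embA] using IdealI_le_comap_truncXi ha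

/-- With `Obst_m(A) = A ∩ I_{m,A}`, one has `Obst_n(A) ⊆ Obst_{n−1}(A)` for every
`n ≥ 2` (writing `n = m + 1` with `m ≥ 1`): if an element `a ∈ A` lies in `I_{n,A}`
inside `A[ξ_{n,A}]`, then it lies in `I_{n−1,A}` inside `A[ξ_{n−1,A}]`. -/
theorem stmt_15 (A : Type*) [Ring A] (m : ℕ) (hm : 1 ≤ m) :
    ∀ a : A, embA (m + 1) a ∈ IdealI A (m + 1) → embA m a ∈ IdealI A m :=
  stmt_15_general A m
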